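/- Let u and v be finite words with |v| < |u|, not powers of a common word, such that v is a suffix of u, and let s be the maximal common suffix of the left-infinite words v^∞ and v^∞u. Then s is a suffix of every left-infinite concatenation of u and v. -/

import Mathlib

/-- `wordPow v n` is the word `v` repeated `n` times. -/
def wordPow {A : Type*} (v : List A) (n : ℕ) : List A := (List.replicate n v).flatten

/-- A finite word `z` is a suffix of the left-infinite word `x`, where `x i` denotes the
letter `i` positions from the right end of `x`. -/
def IsSuffixOfLeftInf {A : Type*} (z : List A) (x : ℕ → A) : Prop :=
  ∀ i : Fin z.length, z.get ⟨z.length - 1 - (i : ℕ), by have := i.isLt; omega⟩ = x i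

/-!
A common suffix `s` of `v^∞` and `v^∞u` is a suffix of `vu`: otherwise `vu` would be a suffix
of `s`, hence of a power of `v`, which forces `uv = vu` and makes `u` and `v` powers of a common
word. Being a suffix of `v^∞`, `s` is also a suffix of `s v^k` for every `k`. Now a left-infinite
concatenation of `u` and `v` is either `v^∞`, or it ends with `y u v^k` for a block `y ∈ {u, v}`,
and then `s <:+ s v^k <:+ v u v^k <:+ y u v^k` because `v` is a suffix of `u`.
-/

open List

section Words

variable {A : Type*}

def PowersOfCommonWord (u v : List A) : Prop :=
  ∃ (t : List A) (m m' : ℕ), 1 ≤ m ∧ 1 ≤ m' ∧ u = wordPow t m ∧ v = wordPow t m'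

lemma wordPow_one (v : List A) : wordPow v 1 = v := by simp [wordPow]

lemma wordPow_add (v : List A) (m n : ℕ) : wordPow v (m + n) = wordPow v m ++ wordPow v n := by
  rw [wordPow, replicate_add, flatten_append]; rfl

lemma wordPow_succ (v : List A) (n : ℕ) : wordPow v (n + 1) = wordPow v n ++ v := by
  rw [wordPow_add, wordPow_one]

lemma wordPow_succ' (v : List A) (n : ℕ) : wordPow v (n + 1) = v ++ wordPow v n := by
  rw [Nat.add_comm, wordPow_add, wordPow_one]

@[simp]
lemma length_wordPow (v : List A) (n : ℕ) : (wordPow v n).length = n * v.length := by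
  simp [wordPow]

lemma wordPow_suffix_wordPow (v : List A) {m n : ℕ} (h : m ≤ n) : wordPow v m <:+ wordPow v n := by
  rw [← Nat.sub_add_cancel h, wordPow_add]
  exact suffix_append _ _

lemma powersOfCommonWord_of_append_comm {x y : List A} (h : x ++ y = y ++ x) (hx : x ≠ [])
    (hy : y ≠ []) : PowersOfCommonWord x y := by
  induction hn : x.length + y.length using Nat.strong_induction_on generalizing x y with
  | _ n ih =>
  wlog hxy : x.length ≤ y.length generalizing x y
  · obtain ⟨t, m, m', hm, hm', rfl, rfl⟩ := this h.symm hy hx (by omega) (by omega)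
    exact ⟨t, m', m, hm', hm, rfl, rfl⟩
  obtain ⟨z, rfl⟩ : x <+: y := prefix_of_prefix_length_le ⟨y, h⟩ (prefix_append y x) hxy
  have hz : x ++ z = z ++ x := by simpa using h
  by_cases hz0 : z = []
  · exact ⟨x, 1, 1, le_rfl, le_rfl, (wordPow_one x).symm, by simp [hz0, wordPow_one]⟩
  have hlt : x.length + z.length < n := by
    have := length_pos_iff.mpr hx
    simp only [← hn, length_append]
    omega
  obtain ⟨t, a, b, ha, hb, rfl, rfl⟩ := ih _ hlt hz hx hz0 rfl
  exact ⟨t, a, a + b, ha, by omega, rfl, (wordPow_add t a b).symm⟩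

lemma append_comm_of_append_suffix_wordPow {u v : List A} {n : ℕ}
    (h : v ++ u <:+ wordPow v n) : v ++ u = u ++ v := by
  cases n with
  | zero =>
    obtain ⟨rfl, rfl⟩ := append_eq_nil_iff.mp (suffix_nil.mp h)
    rfl
  | succ m =>
    have hlen := h.length_le
    simp only [length_append, length_wordPow, Nat.succ_mul] at hlen
    have hu : u <:+ wordPow v m :=
      suffix_of_suffix_length_le ((suffix_append v u).trans h)
        (wordPow_suffix_wordPow v m.le_succ) (by simp; omega)
    have huv : u ++ v <:+ wordPow v (m + 1) := by
      rw [wordPow_succ]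
      exact suffix_append_self_iff.mpr hu
    exact (suffix_of_suffix_length_le h huv (by simp [Nat.add_comm])).eq_of_length
      (by simp [Nat.add_comm])

lemma suffix_append_of_suffix_wordPow_of_suffix_wordPow_append {u v s : List A} {n n' : ℕ}
    (hu : u ≠ []) (hv : v ≠ []) (hnc : ¬ PowersOfCommonWord u v)
    (hs : s <:+ wordPow v n) (hs' : s <:+ wordPow v n' ++ u) : s <:+ v ++ u := by
  cases n' with
  | zero => simpa using hs'.trans (suffix_append v u)
  | succ m =>
    have hvu : v ++ u <:+ wordPow v (m + 1) ++ u := by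
      rw [wordPow_succ, append_assoc]
      exact suffix_append _ _
    refine (suffix_or_suffix_of_suffix hs' hvu).resolve_right fun hvus => hnc ?_
    have hcomm := append_comm_of_append_suffix_wordPow (hvus.trans hs)
    exact powersOfCommonWord_of_append_comm hcomm.symm hu hv

lemma suffix_append_wordPow_of_suffix_wordPow {v s : List A} {n : ℕ} (hs : s <:+ wordPow v n)
    (k : ℕ) : s <:+ s ++ wordPow v k := by
  have hsk : s ++ wordPow v k <:+ wordPow v (n + k) := by
    rw [wordPow_add]
    exact suffix_append_self_iff.mpr hs
  exact suffix_of_suffix_length_le (hs.trans (wordPow_suffix_wordPow v (n.le_add_right k))) hsk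
    (by simp)

lemma suffix_append_append_wordPow {u v y s : List A} {n : ℕ} (hvy : v <:+ y)
    (hvu : s <:+ v ++ u) (hs : s <:+ wordPow v n) (k : ℕ) : s <:+ y ++ u ++ wordPow v k :=
  calc s <:+ s ++ wordPow v k := suffix_append_wordPow_of_suffix_wordPow hs k
    _ <:+ v ++ u ++ wordPow v k := suffix_append_self_iff.mpr hvu
    _ <:+ y ++ u ++ wordPow v k := by
      simp only [append_assoc]
      exact suffix_append_self_iff.mpr hvy

lemma IsSuffixOfLeftInf.of_suffix {s L : List A} {x : ℕ → A} (hL : IsSuffixOfLeftInf L x)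
    (h : s <:+ L) : IsSuffixOfLeftInf s x := by
  intro i
  have hi : (i : ℕ) < L.length := lt_of_lt_of_le i.isLt h.length_le
  rw [← hL ⟨i, hi⟩, get_eq_getElem, get_eq_getElem, h.getElem]
  congr 1
  have := i.isLt
  have := h.length_le
  dsimp only
  omega

-- `w (k - 1) ⋯ w 1 w 0`, the last `k` blocks of `⋯ w 1 w 0`.
def lastBlocks (w : ℕ → List A) (k : ℕ) : List A := ((range k).reverse.map w).flatten

lemma lastBlocks_succ (w : ℕ → List A) (k : ℕ) :
    lastBlocks w (k + 1) = w k ++ lastBlocks w k := by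
  simp [lastBlocks, range_succ]

lemma lastBlocks_eq_wordPow {w : ℕ → List A} {v : List A} {k : ℕ} (h : ∀ j < k, w j = v) :
    lastBlocks w k = wordPow v k := by
  induction k with
  | zero => rfl
  | succ k ih =>
    rw [lastBlocks_succ, h k k.lt_succ_self, ih fun j hj => h j (hj.trans k.lt_succ_self),
      wordPow_succ']

end Words

theorem stmt19_general {A : Type*} (u v s : List A) (hv : v ≠ []) (hu : u ≠ [])
    (hnc : ¬ ∃ (t : List A) (m m' : ℕ), 1 ≤ m ∧ 1 ≤ m' ∧
      u = wordPow t m ∧ v = wordPow t m')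
    (hsuf : v <:+ u)
    (hs1 : ∃ n : ℕ, s <:+ wordPow v n)
    (hs2 : ∃ n : ℕ, s <:+ wordPow v n ++ u)
    (x : ℕ → A) (w : ℕ → List A) (hw : ∀ i : ℕ, w i = u ∨ w i = v)
    (hx : ∀ k : ℕ, IsSuffixOfLeftInf (((List.range k).reverse.map w).flatten) x) :
    IsSuffixOfLeftInf s x := by
  have hx : ∀ k, IsSuffixOfLeftInf (lastBlocks w k) x := hx
  obtain ⟨n, hn⟩ := hs1
  obtain ⟨n', hn'⟩ := hs2
  have hvu : s <:+ v ++ u :=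
    suffix_append_of_suffix_wordPow_of_suffix_wordPow_append hu hv hnc hn hn'
  by_cases hex : ∃ j, w j = u
  · classical
    set k := Nat.find hex
    have hvk : ∀ j < k, w j = v := fun j hj => (hw j).resolve_left (Nat.find_min hex hj)
    have hvw : v <:+ w (k + 1) := by
      rcases hw (k + 1) with h | h <;> rw [h]
      exact hsuf
    have hblocks : lastBlocks w (k + 2) = w (k + 1) ++ u ++ wordPow v k := by
      rw [lastBlocks_succ, lastBlocks_succ, Nat.find_spec hex, lastBlocks_eq_wordPow hvk,
        append_assoc]
    exact (hx (k + 2)).of_suffix (hblocks ▸ suffix_append_append_wordPow hvw hvu hn k)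
  · simp only [not_exists] at hex
    have hall : lastBlocks w n = wordPow v n :=
      lastBlocks_eq_wordPow fun j _ => (hw j).resolve_left (hex j)
    exact (hx n).of_suffix (hall ▸ hn)

/-- If `v` is a suffix of `u`, `|v| < |u|`, `u` and `v` are not powers of a common word, and
`s` is the maximal common suffix of `v^∞` and `v^∞u`, then `s` is a suffix of every
left-infinite concatenation of `u` and `v`. -/
theorem stmt19 {A : Type*} (u v s : List A) (hv : v ≠ []) (hu : u ≠ [])
    (hlen : v.length < u.length)
    (hnc : ¬ ∃ (t : List A) (m m' : ℕ), 1 ≤ m ∧ 1 ≤ m' ∧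
      u = wordPow t m ∧ v = wordPow t m')
    (hsuf : v <:+ u)
    (hs1 : ∃ n : ℕ, s <:+ wordPow v n)
    (hs2 : ∃ n : ℕ, s <:+ wordPow v n ++ u)
    (hmax : ∀ s' : List A, (∃ n : ℕ, s' <:+ wordPow v n) →
      (∃ n : ℕ, s' <:+ wordPow v n ++ u) → s'.length ≤ s.length)
    (x : ℕ → A) (w : ℕ → List A) (hw : ∀ i : ℕ, w i = u ∨ w i = v)
    (hx : ∀ k : ℕ, IsSuffixOfLeftInf (((List.range k).reverse.map w).flatten) x) :
    IsSuffixOfLeftInf s x :=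
  stmt19_general u v s hv hu hnc hsuf hs1 hs2 x w hw hx
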